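/- Let B be an infinite Boolean algebra and λ an infinite cardinal such that no set of ultrafilters of B of cardinality less than λ is dense in the Stone space of B. Then there exist elements a_i ∈ B and ultrafilters p⁰_i, p¹_i of B, for i < λ, such that: (a) a_i ∈ p¹_i and a_i ∉ p⁰_i for every i < λ; (b) for all j < i < λ, a_j ∈ p⁰_i if and only if a_j ∈ p¹_i; (c) for all j < i < λ, a_i ∉ p⁰_j and a_i ∉ p¹_j. -/

import Mathlib

open Cardinal

universe u

/-- An ultrafilter of a Boolean algebra `B`: a proper filter containing,
for each `b : B`, either `b` or `bᶜ`. -/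
structure BAUltrafilter (B : Type u) [BooleanAlgebra B] where
  carrier : Set B
  top_mem : ⊤ ∈ carrier
  bot_not_mem : ⊥ ∉ carrier
  inf_mem : ∀ ⦃x y : B⦄, x ∈ carrier → y ∈ carrier → x ⊓ y ∈ carrier
  mem_of_le : ∀ ⦃x y : B⦄, x ∈ carrier → x ≤ y → y ∈ carrier
  mem_or_compl_mem : ∀ x : B, x ∈ carrier ∨ xᶜ ∈ carrier

instance (B : Type u) [BooleanAlgebra B] : Membership B (BAUltrafilter B) :=
  ⟨fun q b => b ∈ q.carrier⟩

/-- The Stone topology on the set of ultrafilters of `B`, generated by the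
basic (clopen) sets `{q : b ∈ q}` for `b : B`. -/
instance stoneTopology (B : Type u) [BooleanAlgebra B] :
    TopologicalSpace (BAUltrafilter B) :=
  TopologicalSpace.generateFrom {U | ∃ b : B, U = {q : BAUltrafilter B | b ∈ q}}

/-!
The family is built by transfinite recursion. At stage `i` fewer than `λ` elements `a_j` and
ultrafilters `p⁰_j, p¹_j` have been chosen. The finite meets of the `a_j` and their complements
form a set `M` of size `< λ`. Adding to the `p_j` one ultrafilter through each nonzero element of
`M` still gives fewer than `λ` ultrafilters, so they are not dense: some `a_i ≠ ⊥` lies in none of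
them, hence is above no nonzero element of `M`. Take `p¹_i ∋ a_i`. The filter generated by the
elements of `M` lying in `p¹_i` then misses the principal ideal of `a_i`, so by the prime ideal
theorem it extends to an ultrafilter `p⁰_i ∌ a_i`, which agrees with `p¹_i` on every `a_j`.
-/

open Order

theorem mk_finset_lt {α : Type u} {c : Cardinal.{u}} (hc : ℵ₀ ≤ c) (h : #α < c) :
    #(Finset α) < c := by
  cases finite_or_infinite α
  · exact mk_lt_aleph0.trans_le hc
  · rwa [mk_finset_of_infinite]

theorem exists_transfinite_choice {ι α : Type*} [Preorder ι] [WellFoundedLT ι]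
    (P : (i : ι) → (Set.Iio i → α) → α → Prop) (h : ∀ i g, ∃ x, P i g x) :
    ∃ f : ι → α, ∀ i, P i (fun j => f j) (f i) := by
  let f : ι → α := wellFounded_lt.fix fun i g => (h i fun j => g j j.2).choose
  refine ⟨f, fun i => ?_⟩
  rw [show f i = _ from wellFounded_lt.fix_eq _ i]
  exact (h i _).choose_spec

section FiniteMeets

variable {α : Type u} [SemilatticeInf α] [OrderTop α]

-- Unlike Mathlib's `infClosure`, this includes the empty meet `⊤`.
def finiteMeets (S : Set α) : Set α := {m | ∃ t : Finset α, ↑t ⊆ S ∧ t.inf id = m}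

theorem subset_finiteMeets (S : Set α) : S ⊆ finiteMeets S := fun c hc =>
  ⟨{c}, by simpa using hc, by simp⟩

theorem top_mem_finiteMeets (S : Set α) : ⊤ ∈ finiteMeets S := ⟨∅, by simp, rfl⟩

theorem inf_mem_finiteMeets {S : Set α} {x y : α} (hx : x ∈ finiteMeets S)
    (hy : y ∈ finiteMeets S) : x ⊓ y ∈ finiteMeets S := by
  classical
  obtain ⟨t₁, ht₁, rfl⟩ := hx
  obtain ⟨t₂, ht₂, rfl⟩ := hy
  exact ⟨t₁ ∪ t₂, by simp [ht₁, ht₂], Finset.inf_union⟩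

theorem finiteMeets_mono {S T : Set α} (h : S ⊆ T) : finiteMeets S ⊆ finiteMeets T :=
  fun _ ⟨t, ht, hm⟩ => ⟨t, ht.trans h, hm⟩

theorem finiteMeets_subset {S T : Set α} (hST : S ⊆ T) (htop : ⊤ ∈ T) (hT : InfClosed T) :
    finiteMeets S ⊆ T := by
  rintro _ ⟨t, ht, rfl⟩
  exact Finset.inf_induction htop (fun _ h₁ _ h₂ => hT h₁ h₂) fun c hc => hST (ht hc)

theorem mk_finiteMeets_le (S : Set α) : #(finiteMeets S) ≤ #(Finset S) := by
  classical
  have hrange : finiteMeets S ⊆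
      Set.range fun t : Finset S => (t.map (Function.Embedding.subtype _)).inf id := by
    rintro _ ⟨t, ht, rfl⟩
    exact ⟨t.subtype (· ∈ S), by simp only [Finset.subtype_map_of_mem fun _ hc => ht hc]⟩
  exact (mk_le_mk_of_subset hrange).trans mk_range_le

def finiteMeetsFilter (S : Set α) : PFilter α :=
  IsPFilter.toPFilter (F := {y | ∃ m ∈ finiteMeets S, m ≤ y}) <|
    IsPFilter.of_def ⟨⊤, ⊤, top_mem_finiteMeets S, le_rfl⟩
      (fun _ ⟨m₁, hm₁, h₁⟩ _ ⟨m₂, hm₂, h₂⟩ =>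
        ⟨m₁ ⊓ m₂, ⟨_, inf_mem_finiteMeets hm₁ hm₂, le_rfl⟩, inf_le_left.trans h₁,
          inf_le_right.trans h₂⟩)
      fun hxy ⟨m, hm, hmx⟩ => ⟨m, hm, hmx.trans hxy⟩

theorem mem_finiteMeetsFilter {S : Set α} {y : α} :
    y ∈ finiteMeetsFilter S ↔ ∃ m ∈ finiteMeets S, m ≤ y :=
  Iff.rfl

end FiniteMeets

namespace BAUltrafilter

variable {B : Type u} [BooleanAlgebra B] {p : BAUltrafilter B} {b : B}

theorem ne_bot_of_mem (h : b ∈ p) : b ≠ ⊥ := by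
  rintro rfl
  exact p.bot_not_mem h

theorem compl_mem_iff_notMem : bᶜ ∈ p ↔ b ∉ p :=
  ⟨fun hc hb => p.bot_not_mem (by simpa using p.inf_mem hb hc),
    (p.mem_or_compl_mem b).resolve_left⟩

theorem finiteMeets_subset {S : Set B} (h : S ⊆ p.carrier) : finiteMeets S ⊆ p.carrier :=
  _root_.finiteMeets_subset h p.top_mem fun _ hx _ hy => p.inf_mem hx hy

def ofPrimeIdeal (J : Ideal B) (hJ : J.IsPrime) : BAUltrafilter B where
  carrier := (J : Set B)ᶜ
  top_mem := hJ.toIsProper.top_notMem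
  bot_not_mem := not_not.2 J.bot_mem
  inf_mem _ _ hx hy hxy := (hJ.mem_or_mem hxy).elim hx hy
  mem_of_le _ _ hx hxy hy := hx (J.lower hxy hy)
  mem_or_compl_mem x := not_and_or.1 fun h =>
    hJ.toIsProper.top_notMem (by simpa using Ideal.sup_mem h.1 h.2)

theorem exists_of_disjoint {F : PFilter B} {I : Ideal B} (h : Disjoint (F : Set B) I) :
    ∃ p : BAUltrafilter B, (F : Set B) ⊆ p.carrier ∧ ∀ x ∈ I, x ∉ p := by
  obtain ⟨J, hJ, hIJ, hFJ⟩ := DistribLattice.prime_ideal_of_disjoint_filter_ideal h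
  exact ⟨ofPrimeIdeal J hJ, hFJ.subset_compl_right, fun x hx hxJ => hxJ (hIJ hx)⟩

theorem exists_mem_of_ne_bot (hb : b ≠ ⊥) : ∃ p : BAUltrafilter B, b ∈ p := by
  obtain ⟨p, hp, -⟩ := exists_of_disjoint (F := PFilter.principal b) (I := Ideal.principal ⊥) <|
    Set.disjoint_left.2 fun x hbx hx => hb (le_bot_iff.1 (hbx.trans hx))
  exact ⟨p, hp (le_refl b)⟩

theorem isTopologicalBasis :
    TopologicalSpace.IsTopologicalBasis {U | ∃ b : B, U = {q : BAUltrafilter B | b ∈ q}} where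
  exists_subset_inter := by
    rintro _ ⟨b, rfl⟩ _ ⟨c, rfl⟩ q hq
    refine ⟨_, ⟨b ⊓ c, rfl⟩, q.inf_mem hq.1 hq.2, fun r hr => ?_⟩
    exact ⟨r.mem_of_le hr inf_le_left, r.mem_of_le hr inf_le_right⟩
  sUnion_eq := Set.sUnion_eq_univ_iff.2 fun q => ⟨_, ⟨⊤, rfl⟩, q.top_mem⟩
  eq_generateFrom := rfl

theorem dense_iff {Q : Set (BAUltrafilter B)} : Dense Q ↔ ∀ b : B, b ≠ ⊥ → ∃ q ∈ Q, b ∈ q := by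
  rw [isTopologicalBasis.dense_iff]
  constructor
  · intro h b hb
    obtain ⟨q, hq, hbq⟩ := h _ ⟨b, rfl⟩ (exists_mem_of_ne_bot hb)
    exact ⟨q, hbq, hq⟩
  · rintro h _ ⟨b, rfl⟩ ⟨p, hbp⟩
    obtain ⟨q, hq, hbq⟩ := h b (ne_bot_of_mem hbp)
    exact ⟨q, hbq, hq⟩

end BAUltrafilter

section Construction

variable {B : Type u} [BooleanAlgebra B] {lam : Cardinal.{u}}

open BAUltrafilter

theorem exists_ne_bot_avoiding (hlam : ℵ₀ ≤ lam)
    (hnotdense : ∀ Q : Set (BAUltrafilter B), #Q < lam → ¬ Dense Q)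
    {Q : Set (BAUltrafilter B)} {M : Set B} (hQ : #Q < lam) (hM : #M < lam) :
    ∃ a : B, a ≠ ⊥ ∧ (∀ q ∈ Q, a ∉ q) ∧ ∀ m ∈ M, m ≤ a → m = ⊥ := by
  choose f hf using fun m : {m // m ∈ M ∧ m ≠ ⊥} => exists_mem_of_ne_bot m.2.2
  have hcard : #(Q ∪ Set.range f : Set (BAUltrafilter B)) < lam :=
    (mk_union_le _ _).trans_lt <| add_lt_of_lt hlam hQ <|
      mk_range_le.trans_lt <| (mk_subtype_le_of_subset fun _ h => h.1).trans_lt hM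
  obtain ⟨a, ha, havoid⟩ : ∃ a : B, a ≠ ⊥ ∧ ∀ q ∈ Q ∪ Set.range f, a ∉ q := by
    simpa [dense_iff] using hnotdense _ hcard
  refine ⟨a, ha, fun q hq => havoid q (.inl hq), fun m hm hma => ?_⟩
  by_contra hm₀
  exact havoid _ (.inr ⟨⟨m, hm, hm₀⟩, rfl⟩) ((f _).mem_of_le (hf ⟨m, hm, hm₀⟩) hma)

theorem exists_notMem_agreeing {s : Set B} {a : B} {p₁ : BAUltrafilter B}
    (hbelow : ∀ m ∈ finiteMeets (s ∪ compl '' s), m ≤ a → m = ⊥) :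
    ∃ p₀ : BAUltrafilter B, a ∉ p₀ ∧ ∀ c ∈ s, c ∈ p₀ ↔ c ∈ p₁ := by
  set T := {c ∈ s ∪ compl '' s | c ∈ p₁}
  have hdisj : Disjoint (finiteMeetsFilter T : Set B) (Ideal.principal a) := by
    refine Set.disjoint_left.2 fun y hy hya => ?_
    obtain ⟨m, hm, hmy⟩ := mem_finiteMeetsFilter.1 hy
    exact ne_bot_of_mem (p₁.finiteMeets_subset (fun _ hc => hc.2) hm)
      (hbelow m (finiteMeets_mono (fun _ hc => hc.1) hm) (hmy.trans hya))
  obtain ⟨p₀, hTp₀, hap₀⟩ := exists_of_disjoint hdisj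
  have hT : T ⊆ p₀.carrier := fun c hc =>
    hTp₀ (mem_finiteMeetsFilter.2 ⟨c, subset_finiteMeets T hc, le_rfl⟩)
  refine ⟨p₀, hap₀ a le_rfl, fun c hc => ⟨fun hc₀ => ?_, fun hc₁ => hT ⟨.inl hc, hc₁⟩⟩⟩
  by_contra hc₁
  exact compl_mem_iff_notMem.1 (hT ⟨.inr ⟨c, hc, rfl⟩, compl_mem_iff_notMem.2 hc₁⟩) hc₀

theorem exists_separating_step (hlam : ℵ₀ ≤ lam)
    (hnotdense : ∀ Q : Set (BAUltrafilter B), #Q < lam → ¬ Dense Q)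
    {ι : Type u} (hι : #ι < lam) (a : ι → B) (p₀ p₁ : ι → BAUltrafilter B) :
    ∃ (b : B) (q₀ q₁ : BAUltrafilter B), b ∈ q₁ ∧ b ∉ q₀ ∧
      (∀ j, a j ∈ q₀ ↔ a j ∈ q₁) ∧ ∀ j, b ∉ p₀ j ∧ b ∉ p₁ j := by
  have hQ : #(Set.range p₀ ∪ Set.range p₁ : Set (BAUltrafilter B)) < lam :=
    (mk_union_le _ _).trans_lt <|
      add_lt_of_lt hlam (mk_range_le.trans_lt hι) (mk_range_le.trans_lt hι)
  have hM : #(finiteMeets (Set.range a ∪ compl '' Set.range a)) < lam :=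
    (mk_finiteMeets_le _).trans_lt <| mk_finset_lt hlam <| (mk_union_le _ _).trans_lt <|
      add_lt_of_lt hlam (mk_range_le.trans_lt hι) (mk_image_le.trans_lt (mk_range_le.trans_lt hι))
  obtain ⟨b, hb, havoid, hbelow⟩ := exists_ne_bot_avoiding hlam hnotdense hQ hM
  obtain ⟨q₁, hbq₁⟩ := exists_mem_of_ne_bot hb
  obtain ⟨q₀, hbq₀, hagree⟩ := exists_notMem_agreeing hbelow
  exact ⟨b, q₀, q₁, hbq₁, hbq₀, fun j => hagree _ ⟨j, rfl⟩,
    fun j => ⟨havoid _ (.inl ⟨j, rfl⟩), havoid _ (.inr ⟨j, rfl⟩)⟩⟩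

end Construction

theorem exists_separating_family_general (B : Type u) [BooleanAlgebra B]
    (lam : Cardinal.{u}) (hlam : ℵ₀ ≤ lam)
    (hnotdense : ∀ Q : Set (BAUltrafilter B), #Q < lam → ¬ Dense Q) :
    ∃ (a : lam.ord.ToType → B) (p0 p1 : lam.ord.ToType → BAUltrafilter B),
      (∀ i, a i ∈ p1 i ∧ a i ∉ p0 i) ∧
      (∀ j i, j < i → (a j ∈ p0 i ↔ a j ∈ p1 i)) ∧
      (∀ j i, j < i → a i ∉ p0 j ∧ a i ∉ p1 j) := by
  obtain ⟨x, hx⟩ := exists_transfinite_choice (ι := lam.ord.ToType)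
    (fun i (g : Set.Iio i → B × BAUltrafilter B × BAUltrafilter B) x =>
      x.1 ∈ x.2.2 ∧ x.1 ∉ x.2.1 ∧ (∀ j, (g j).1 ∈ x.2.1 ↔ (g j).1 ∈ x.2.2) ∧
        ∀ j, x.1 ∉ (g j).2.1 ∧ x.1 ∉ (g j).2.2)
    fun i g => by
      obtain ⟨b, q₀, q₁, h⟩ := exists_separating_step hlam hnotdense
        (by simpa using mk_Iio_lt i) (fun j => (g j).1) (fun j => (g j).2.1) (fun j => (g j).2.2)
      exact ⟨(b, q₀, q₁), h⟩
  exact ⟨fun i => (x i).1, fun i => (x i).2.1, fun i => (x i).2.2,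
    fun i => ⟨(hx i).1, (hx i).2.1⟩, fun j i hj => (hx i).2.2.1 ⟨j, hj⟩,
    fun j i hj => (hx i).2.2.2 ⟨j, hj⟩⟩

/-- If `B` is an infinite Boolean algebra and `λ` an infinite
cardinal such that no set of ultrafilters of `B` of cardinality `< λ` is dense
in the Stone space, then there exist `a_i ∈ B` and ultrafilters `p⁰_i, p¹_i`
of `B` for `i < λ` satisfying: (a) `a_i ∈ p¹_i` and `a_i ∉ p⁰_i`;
(b) for `j < i`, `a_j ∈ p⁰_i ↔ a_j ∈ p¹_i`;
(c) for `j < i`, `a_i ∉ p⁰_j` and `a_i ∉ p¹_j`. -/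
theorem exists_separating_family (B : Type u) [BooleanAlgebra B] [Infinite B]
    (lam : Cardinal.{u}) (hlam : ℵ₀ ≤ lam)
    (hnotdense : ∀ Q : Set (BAUltrafilter B), #Q < lam → ¬ Dense Q) :
    ∃ (a : lam.ord.ToType → B) (p0 p1 : lam.ord.ToType → BAUltrafilter B),
      (∀ i, a i ∈ p1 i ∧ a i ∉ p0 i) ∧
      (∀ j i, j < i → (a j ∈ p0 i ↔ a j ∈ p1 i)) ∧
      (∀ j i, j < i → a i ∉ p0 j ∧ a i ∉ p1 j) :=
  exists_separating_family_general B lam hlam hnotdense
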